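/- arXiv:1405.0500 — 3 statements merged into one kernel-verified Lean document; each statement's English description precedes it below -/
import Mathlib

section
/- Let A be a weighted automaton over the tropical semiring satisfying the R-weak twins property for an admissible relation R. Then A is R-pre-disambiguable: the R-pre-disambiguation construction produces only finitely many distinct states. -/
/-- A weighted finite automaton over alphabet `α` with weights in `S` and states `Q`:
initial states `I`, final states `F`, transitions `E ⊆ Q × Σ × S × Q`,
initial weight function `lam` and final weight function `rho`. -/
structure WFA (α S Q : Type) where
  I : Finset Q
  F : Finset Q
  E : Finset (Q × α × S × Q)
  lam : Q → S
  rho : Q → S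

namespace WFA

variable {α S Q : Type}

/-- `PathTo A p x q` holds iff there is a path in `A` from `p` to `q` labeled with `x`. -/
inductive PathTo (A : WFA α S Q) : Q → List α → Q → Prop
  | nil (q : Q) : PathTo A q [] q
  | cons {p : Q} {a : α} {w : S} {q r : Q} {x : List α} :
      (p, a, w, q) ∈ A.E → PathTo A q x r → PathTo A p (a :: x) r

/-- The common-future relation `R*`: `q` and `q'` share a common future, i.e. some
string `x` labels a path from `q` to a final state and a path from `q'` to a final state. -/
def CF (A : WFA α S Q) (q q' : Q) : Prop :=
  ∃ x f f', f ∈ A.F ∧ f' ∈ A.F ∧ A.PathTo q x f ∧ A.PathTo q' x f'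

/-- A state is accessible if reachable from some initial state. -/
def Accessible (A : WFA α S Q) (q : Q) : Prop := ∃ x i, i ∈ A.I ∧ A.PathTo i x q

/-- A state is coaccessible if some final state is reachable from it. -/
def Coaccessible (A : WFA α S Q) (q : Q) : Prop := ∃ x f, f ∈ A.F ∧ A.PathTo q x f

/-- A WFA is trim if every state is accessible and coaccessible. -/
def Trim (A : WFA α S Q) : Prop := ∀ q : Q, A.Accessible q ∧ A.Coaccessible q

/-- A relation `R` on states is compatible with the inverse transition function if
`q R q'`, `q ∈ δ(p, x)` and `q' ∈ δ(p', x)` imply `p R p'`. -/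
def Compatible (A : WFA α S Q) (R : Q → Q → Prop) : Prop :=
  ∀ p p' q q' : Q, ∀ x : List α, R q q' → A.PathTo p x q → A.PathTo p' x q' → R p p'

/-- A relation `R` is coarser than the common-future relation `R*`. -/
def Coarser (A : WFA α S Q) (R : Q → Q → Prop) : Prop :=
  ∀ q q' : Q, A.CF q q' → R q q'

/-- Admissible relations: compatible with the inverse transition function and
coarser than the common-future relation. -/
def Admissible (A : WFA α S Q) (R : Q → Q → Prop) : Prop :=
  A.Compatible R ∧ A.Coarser R

end WFA

open scoped ENNReal

namespace WFA

variable {α Q : Type} [DecidableEq Q] [DecidableEq α]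

/-- One-step transition function on sets of states: `δ(U, a)`. -/
def dstep {S : Type} (A : WFA α S Q) (U : Finset Q) (a : α) : Finset Q :=
  (A.E.filter (fun e => e.1 ∈ U ∧ e.2.1 = a)).image (fun e => e.2.2.2)

/-- `reach A U x` is `δ(U, x)`, the set of states reached from `U` by paths labeled `x`. -/
def reach {S : Type} (A : WFA α S Q) : Finset Q → List α → Finset Q
  | U, [] => U
  | U, a :: x => A.reach (A.dstep U a) x

/-- `W(p, x, q)` in the tropical semiring `(ℝ≥0 ∪ {+∞}, min, +, +∞, 0)`: the minimum of
the weights of the paths from `p` to `q` labeled with `x` (`+∞ = 0̄` if there is none). -/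
noncomputable def Wt (A : WFA α ℝ≥0∞ Q) : Q → List α → Q → ℝ≥0∞
  | p, [], r => if p = r then 0 else ⊤
  | p, a :: x, r =>
      (A.E.filter (fun e => e.1 = p ∧ e.2.1 = a)).inf (fun e => e.2.2.1 + A.Wt e.2.2.2 x r)

/-- `W_I(x, p)` in the tropical semiring, including initial weights. -/
noncomputable def WIt (A : WFA α ℝ≥0∞ Q) (x : List α) (p : Q) : ℝ≥0∞ :=
  A.I.inf (fun i => A.lam i + A.Wt i x p)

/-- `δ_q(I, x)`: the states of `δ(I, x)` that are in relation `R` with `q`. -/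
def deltaR {S : Type} (A : WFA α S Q) (R : Q → Q → Prop) [DecidableRel R]
    (x : List α) (q : Q) : Finset Q :=
  (A.reach A.I x).filter (fun p => R p q)

/-- The residual-weight component of the weighted subset `s(x, q)` in the tropical
semiring: `p ↦ W_I(x, p) − min_{p' ∈ δ_q(I,x)} W_I(x, p')` on `δ_q(I, x)`
(and `+∞ = 0̄` elsewhere). -/
noncomputable def sT (A : WFA α ℝ≥0∞ Q) (R : Q → Q → Prop) [DecidableRel R]
    (x : List α) (q : Q) : Q → ℝ≥0∞ :=
  fun p => if p ∈ A.deltaR R x q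
    then A.WIt x p - (A.deltaR R x q).inf (fun p' => A.WIt x p')
    else ⊤

/-- The set of states `(q, s(x, q))` created by the `R`-pre-disambiguation construction. -/
noncomputable def Sts (A : WFA α ℝ≥0∞ Q) (R : Q → Q → Prop) [DecidableRel R] :
    Set (Q × Finset Q × (Q → ℝ≥0∞)) :=
  {st | ∃ x : List α, st.1 ∈ A.reach A.I x ∧
    st.2.1 = A.deltaR R x st.1 ∧ st.2.2 = A.sT R x st.1}

/-- `A` is `R`-pre-disambiguable: the construction creates finitely many distinct states. -/
def RPredisambiguable (A : WFA α ℝ≥0∞ Q) (R : Q → Q → Prop) [DecidableRel R] : Prop :=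
  (A.Sts R).Finite

/-- Two states are siblings if both are reachable from initial states by a common string
`x` and there are (nonempty) cycles at both labeled by a common string `y`. -/
def Siblings {S : Type} (A : WFA α S Q) (p q : Q) : Prop :=
  (∃ (x : List α) (i i' : Q), i ∈ A.I ∧ i' ∈ A.I ∧ A.PathTo i x p ∧ A.PathTo i' x q) ∧
  (∃ y : List α, y ≠ [] ∧ A.PathTo p y p ∧ A.PathTo q y q)

/-- Two sibling states are twins if for every string `y` labeling cycles at both,
the cycle weights agree: `W(p, y, p) = W(q, y, q)`. -/
def Twins (A : WFA α ℝ≥0∞ Q) (p q : Q) : Prop :=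
  ∀ y : List α, A.PathTo p y p → A.PathTo q y q → A.Wt p y p = A.Wt q y q

/-- The twins property: any two siblings are twins. -/
def TwinsProperty (A : WFA α ℝ≥0∞ Q) : Prop :=
  ∀ p q : Q, A.Siblings p q → A.Twins p q

/-- The `R`-weak twins property: any two siblings in `R`-relation are twins. -/
def RWeakTwins (A : WFA α ℝ≥0∞ Q) (R : Q → Q → Prop) : Prop :=
  ∀ p q : Q, A.Siblings p q → R p q → A.Twins p q

end WFA

/-! ### Auxiliary development for the proof -/

set_option linter.unusedSectionVars false
set_option maxHeartbeats 1000000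

namespace WFA

section Aux
variable {α S Q : Type}

theorem pathTo_append {A : WFA α S Q} {p q r : Q} {x y : List α}
    (h1 : A.PathTo p x q) (h2 : A.PathTo q y r) :
    A.PathTo p (x ++ y) r := by
  induction h1 with
  | nil => simpa using h2
  | cons he _ ih => exact PathTo.cons he (ih h2)

end Aux

variable {α Q : Type} [DecidableEq Q] [DecidableEq α]

/-- runs: explicit lists of edges -/
def IsRun (A : WFA α ℝ≥0∞ Q) : Q → List (Q × α × ℝ≥0∞ × Q) → Q → Prop
  | p, [], r => p = r
  | p, e :: es, r => e ∈ A.E ∧ e.1 = p ∧ IsRun A e.2.2.2 es r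

def lbl (es : List (Q × α × ℝ≥0∞ × Q)) : List α := es.map (fun e => e.2.1)

noncomputable def cost (es : List (Q × α × ℝ≥0∞ × Q)) : ℝ≥0∞ := (es.map (fun e => e.2.2.1)).sum

def stAt (p : Q) (es : List (Q × α × ℝ≥0∞ × Q)) (k : ℕ) : Q :=
  (es.take k).foldl (fun _ e => e.2.2.2) p

@[simp] lemma lbl_nil : lbl ([] : List (Q × α × ℝ≥0∞ × Q)) = [] := rfl
@[simp] lemma lbl_cons (e : Q × α × ℝ≥0∞ × Q) (es : List (Q × α × ℝ≥0∞ × Q)) :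
    lbl (e :: es) = e.2.1 :: lbl es := rfl
@[simp] lemma cost_nil : cost ([] : List (Q × α × ℝ≥0∞ × Q)) = 0 := rfl
@[simp] lemma cost_cons (e : Q × α × ℝ≥0∞ × Q) (es : List (Q × α × ℝ≥0∞ × Q)) :
    cost (e :: es) = e.2.2.1 + cost es := by simp [cost]

lemma lbl_append (es1 es2 : List (Q × α × ℝ≥0∞ × Q)) :
    lbl (es1 ++ es2) = lbl es1 ++ lbl es2 := by simp [lbl]

lemma cost_append (es1 es2 : List (Q × α × ℝ≥0∞ × Q)) :
    cost (es1 ++ es2) = cost es1 + cost es2 := by simp [cost]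

lemma lbl_take (es : List (Q × α × ℝ≥0∞ × Q)) (k : ℕ) : lbl (es.take k) = (lbl es).take k := by
  simp [lbl, List.map_take]

lemma lbl_drop (es : List (Q × α × ℝ≥0∞ × Q)) (k : ℕ) : lbl (es.drop k) = (lbl es).drop k := by
  simp [lbl, List.map_drop]

lemma lbl_length (es : List (Q × α × ℝ≥0∞ × Q)) : (lbl es).length = es.length := by simp [lbl]

@[simp] lemma stAt_zero (p : Q) (es : List (Q × α × ℝ≥0∞ × Q)) : stAt p es 0 = p := rfl

lemma stAt_cons (p : Q) (e : Q × α × ℝ≥0∞ × Q) (es : List (Q × α × ℝ≥0∞ × Q)) (k : ℕ) :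
    stAt p (e :: es) (k + 1) = stAt e.2.2.2 es k := by
  simp [stAt, List.take_succ_cons]

variable {A : WFA α ℝ≥0∞ Q}

lemma isRun_append {p q r : Q} {es1 es2 : List (Q × α × ℝ≥0∞ × Q)}
    (h1 : A.IsRun p es1 q) (h2 : A.IsRun q es2 r) :
    A.IsRun p (es1 ++ es2) r := by
  induction es1 generalizing p with
  | nil => cases h1; simpa using h2
  | cons e es ih => exact ⟨h1.1, h1.2.1, ih h1.2.2⟩

lemma isRun_take_drop {p r : Q} {es : List (Q × α × ℝ≥0∞ × Q)} (h : A.IsRun p es r) (k : ℕ) :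
    A.IsRun p (es.take k) (stAt p es k) ∧ A.IsRun (stAt p es k) (es.drop k) r := by
  induction es generalizing p k with
  | nil => simp [stAt]; cases h; exact ⟨rfl, rfl⟩
  | cons e es ih =>
    cases k with
    | zero => exact ⟨rfl, h⟩
    | succ k =>
      obtain ⟨he, hp, hrest⟩ := h
      have := ih hrest k
      rw [stAt_cons]
      exact ⟨⟨he, hp, this.1⟩, this.2⟩

lemma stAt_add (p : Q) (es : List (Q × α × ℝ≥0∞ × Q)) (k k' : ℕ) :
    stAt p es (k + k') = stAt (stAt p es k) (es.drop k) k' := by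
  simp only [stAt]
  rw [List.take_add, List.foldl_append]

lemma pathTo_of_isRun {p r : Q} {es : List (Q × α × ℝ≥0∞ × Q)} (h : A.IsRun p es r) :
    A.PathTo p (lbl es) r := by
  induction es generalizing p with
  | nil => cases h; simpa using PathTo.nil r
  | cons e es ih =>
    obtain ⟨he, hp, hrest⟩ := h
    subst hp
    exact PathTo.cons (show (e.1, e.2.1, e.2.2.1, e.2.2.2) ∈ A.E by simpa using he) (ih hrest)

lemma isRun_of_pathTo {p r : Q} {x : List α} (h : A.PathTo p x r) :
    ∃ es, A.IsRun p es r ∧ lbl es = x := by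
  induction h with
  | nil q => exact ⟨[], rfl, rfl⟩
  | @cons p a w q r x he _ ih =>
    obtain ⟨es, hrun, hl⟩ := ih
    exact ⟨(p, a, w, q) :: es, ⟨he, rfl, hrun⟩, by simp [hl]⟩

lemma stAt_mem_targets {p r : Q} {es : List (Q × α × ℝ≥0∞ × Q)} (h : A.IsRun p es r) (k : ℕ)
    (hk : k ≠ 0) (hk2 : k ≤ es.length) :
    stAt p es k ∈ A.E.image (fun e => e.2.2.2) := by
  induction es generalizing p k with
  | nil => simp at hk2; omega
  | cons e es ih =>
    obtain ⟨he, _, hrest⟩ := h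
    cases k with
    | zero => exact absurd rfl hk
    | succ k =>
      rw [stAt_cons]
      cases k with
      | zero => exact Finset.mem_image_of_mem _ he
      | succ k => exact ih hrest (k+1) (by omega) (by simpa using hk2)

lemma stAt_last {p r : Q} {es : List (Q × α × ℝ≥0∞ × Q)} (h : A.IsRun p es r) :
    stAt p es es.length = r := by
  induction es generalizing p with
  | nil => simpa [stAt, IsRun] using h
  | cons e es ih =>
    obtain ⟨_, _, hrest⟩ := h
    rw [List.length_cons, stAt_cons]
    exact ih hrest

lemma wt_le_cost {p r : Q} {es : List (Q × α × ℝ≥0∞ × Q)} (h : A.IsRun p es r) :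
    A.Wt p (lbl es) r ≤ cost es := by
  induction es generalizing p with
  | nil => cases h; simp [Wt]
  | cons e es ih =>
    obtain ⟨he, hp, hrest⟩ := h
    rw [lbl_cons, cost_cons]
    calc (A.E.filter (fun e' => e'.1 = p ∧ e'.2.1 = e.2.1)).inf
          (fun e' => e'.2.2.1 + A.Wt e'.2.2.2 (lbl es) r)
        ≤ e.2.2.1 + A.Wt e.2.2.2 (lbl es) r :=
          Finset.inf_le (Finset.mem_filter.mpr ⟨he, hp, rfl⟩)
      _ ≤ e.2.2.1 + cost es := add_le_add le_rfl (ih hrest)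

lemma wt_attained {p r : Q} {z : List α} (h : A.Wt p z r ≠ ⊤) :
    ∃ es, A.IsRun p es r ∧ lbl es = z ∧ cost es = A.Wt p z r := by
  induction z generalizing p with
  | nil =>
    by_cases hpr : p = r
    · subst hpr; exact ⟨[], rfl, rfl, by simp [Wt]⟩
    · exact absurd (by simp [Wt, hpr]) h
  | cons a z ih =>
    set s := A.E.filter (fun e => e.1 = p ∧ e.2.1 = a) with hs
    have hne : s.Nonempty := by
      rcases s.eq_empty_or_nonempty with he | hne
      · exfalso; apply h; show s.inf _ = ⊤; rw [he]; simp
      · exact hne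
    obtain ⟨e, hes, hinf⟩ := Finset.exists_mem_eq_inf s hne
      (fun e => e.2.2.1 + A.Wt e.2.2.2 z r)
    have hWt : A.Wt p (a :: z) r = e.2.2.1 + A.Wt e.2.2.2 z r := hinf
    have h2 : A.Wt e.2.2.2 z r ≠ ⊤ := by
      intro htop
      apply h
      rw [hWt, htop, add_top]
    obtain ⟨es, hrun, hl, hc⟩ := ih h2
    obtain ⟨heE, he1, he2⟩ := Finset.mem_filter.mp hes
    refine ⟨e :: es, ⟨heE, he1, hrun⟩, by rw [lbl_cons, hl, he2], ?_⟩
    rw [cost_cons, hc, hWt]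

lemma cost_take_add_drop (es : List (Q × α × ℝ≥0∞ × Q)) (k : ℕ) :
    cost (es.take k) + cost (es.drop k) = cost es := by
  rw [← cost_append, List.take_append_drop]

lemma lbl_take_append_drop (es : List (Q × α × ℝ≥0∞ × Q)) (k : ℕ) :
    lbl (es.take k) ++ lbl (es.drop k) = lbl es := by
  rw [← lbl_append, List.take_append_drop]

/-- pieces of minimal runs are minimal -/
lemma exact_split {p r : Q} {es : List (Q × α × ℝ≥0∞ × Q)} (hrun : A.IsRun p es r)
    (hcost : cost es = A.Wt p (lbl es) r) (hfin : cost es ≠ ⊤) (k : ℕ) :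
    cost (es.take k) = A.Wt p (lbl (es.take k)) (stAt p es k) ∧
    cost (es.drop k) = A.Wt (stAt p es k) (lbl (es.drop k)) r := by
  set m := stAt p es k with hm
  obtain ⟨h1, h2⟩ := isRun_take_drop hrun k
  have hsum := cost_take_add_drop es k
  have hfin1 : cost (es.take k) ≠ ⊤ := by
    intro ht; apply hfin; rw [← hsum, ht, top_add]
  have hfin2 : cost (es.drop k) ≠ ⊤ := by
    intro ht; apply hfin; rw [← hsum, ht, add_top]
  have le1 : A.Wt p (lbl (es.take k)) m ≤ cost (es.take k) := wt_le_cost h1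
  have le2 : A.Wt m (lbl (es.drop k)) r ≤ cost (es.drop k) := wt_le_cost h2
  constructor
  · refine le_antisymm ?_ le1
    by_contra hcon
    push_neg at hcon
    have hWne : A.Wt p (lbl (es.take k)) m ≠ ⊤ := (lt_of_lt_of_le hcon le_top).ne
    obtain ⟨es1, hrun1, hl1, hc1⟩ := wt_attained hWne
    have hsplice : A.IsRun p (es1 ++ es.drop k) r := isRun_append hrun1 h2
    have hlbl : lbl (es1 ++ es.drop k) = lbl es := by
      rw [lbl_append, hl1, lbl_take_append_drop]
    have hlt : cost (es1 ++ es.drop k) < cost es := by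
      rw [cost_append, hc1, ← hsum]
      exact ENNReal.add_lt_add_right hfin2 hcon
    have := wt_le_cost hsplice
    rw [hlbl, ← hcost] at this
    exact absurd (lt_of_le_of_lt this hlt) (lt_irrefl _)
  · refine le_antisymm ?_ le2
    by_contra hcon
    push_neg at hcon
    have hWne : A.Wt m (lbl (es.drop k)) r ≠ ⊤ := (lt_of_lt_of_le hcon le_top).ne
    obtain ⟨es2, hrun2, hl2, hc2⟩ := wt_attained hWne
    have hsplice : A.IsRun p (es.take k ++ es2) r := isRun_append h1 hrun2
    have hlbl : lbl (es.take k ++ es2) = lbl es := by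
      rw [lbl_append, hl2, lbl_take_append_drop]
    have hlt : cost (es.take k ++ es2) < cost es := by
      rw [cost_append, hc2, ← hsum]
      exact ENNReal.add_lt_add_left hfin1 hcon
    have := wt_le_cost hsplice
    rw [hlbl, ← hcost] at this
    exact absurd (lt_of_le_of_lt this hlt) (lt_irrefl _)

/-- values of `Wt` on words of length ≤ 1 lie in a fixed finite set -/
lemma wt_short_mem {u v : Q} {z : List α} (hz : z.length ≤ 1) :
    A.Wt u z v ∈ insert (0 : ℝ≥0∞) (insert ⊤ (A.E.image (fun e => e.2.2.1))) := by
  match z, hz with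
  | [], _ =>
    by_cases h : u = v <;> simp [Wt, h]
  | [a], _ =>
    show (A.E.filter (fun e => e.1 = u ∧ e.2.1 = a)).inf
        (fun e => e.2.2.1 + A.Wt e.2.2.2 [] v) ∈ _
    set s := A.E.filter (fun e => e.1 = u ∧ e.2.1 = a) with hs
    rcases s.eq_empty_or_nonempty with he | hne
    · rw [he]; simp
    · obtain ⟨e, hes, hinf⟩ := Finset.exists_mem_eq_inf s hne
        (fun e => e.2.2.1 + A.Wt e.2.2.2 [] v)
      rw [hinf]
      by_cases h : e.2.2.2 = v
      · have : A.Wt e.2.2.2 [] v = 0 := by simp [Wt, h]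
        rw [this, add_zero]
        exact Finset.mem_insert_of_mem (Finset.mem_insert_of_mem
          (Finset.mem_image_of_mem _ (Finset.mem_filter.mp hes).1))
      · have : A.Wt e.2.2.2 [] v = ⊤ := by simp [Wt, h]
        rw [this, add_top]
        simp

lemma exists_pathTo_of_mem_reach {U : Finset Q} {x : List α} {q : Q}
    (h : q ∈ A.reach U x) : ∃ p ∈ U, A.PathTo p x q := by
  induction x generalizing U with
  | nil => exact ⟨q, h, PathTo.nil q⟩
  | cons a x ih =>
    obtain ⟨p', hp', hpath⟩ := ih (show q ∈ A.reach (A.dstep U a) x from h)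
    simp only [dstep, Finset.mem_image, Finset.mem_filter] at hp'
    obtain ⟨e, ⟨heE, heU, hea⟩, het⟩ := hp'
    refine ⟨e.1, heU, ?_⟩
    refine PathTo.cons (show (e.1, a, e.2.2.1, p') ∈ A.E from ?_) hpath
    have : e = (e.1, a, e.2.2.1, p') := by
      rw [← hea, ← het]
    rw [← this]
    exact heE

end WFA

namespace WFA

variable {α Q : Type} [DecidableEq Q] [DecidableEq α]

/-- sums of at most `k` elements of `F` -/
def sums (F : Set ℝ) : ℕ → Set ℝ
  | 0 => {0}
  | k+1 => sums F k ∪ Set.image2 (· + ·) F (sums F k)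

lemma sums_finite {F : Set ℝ} (hF : F.Finite) : ∀ k, (sums F k).Finite
  | 0 => Set.finite_singleton 0
  | k+1 => ((sums_finite hF k).union (Set.Finite.image2 _ hF (sums_finite hF k)))

lemma mem_sums_succ_of_mem {F : Set ℝ} {x : ℝ} (hx : x ∈ F) (k : ℕ) : x ∈ sums F (k+1) := by
  induction k with
  | zero => exact Or.inr ⟨x, hx, 0, rfl, by simp⟩
  | succ k ih => exact Or.inl ih

lemma add_mem_sums {F : Set ℝ} {x y : ℝ} (hx : x ∈ F) {k : ℕ} (hy : y ∈ sums F k) :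
    x + y ∈ sums F (k+1) :=
  Or.inr ⟨x, hx, y, hy, rfl⟩

lemma sums_mono_succ {F : Set ℝ} (k : ℕ) : sums F k ⊆ sums F (k+1) := by
  cases k with
  | zero => intro x hx; rcases hx with rfl; exact Or.inl rfl
  | succ k => exact fun x hx => Or.inl hx

lemma sums_mono {F : Set ℝ} {k l : ℕ} (h : k ≤ l) : sums F k ⊆ sums F l := by
  induction h with
  | refl => exact subset_rfl
  | step _ ih => exact ih.trans (sums_mono_succ _)

variable (A : WFA α ℝ≥0∞ Q)

/-- weights of single steps -/
noncomputable def W0 : Finset ℝ≥0∞ := insert 0 (insert ⊤ (A.E.image (fun e => e.2.2.1)))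

/-- bound on the number of summands: number of pairs of target states -/
noncomputable def Bnd : ℕ := ((A.E.image (fun e => e.2.2.2)).card) ^ 2

/-- the candidate sets of difference values, defined by recursion on the number of
interior states of the anchoring run -/
noncomputable def Cand : ℕ → Set ℝ
  | 0 => Set.image2 (fun a b => ENNReal.toReal a - ENNReal.toReal b) (A.W0 : Set ℝ≥0∞) (A.W0 : Set ℝ≥0∞)
  | n+1 => sums (Cand n) (A.Bnd + 1)

lemma cand_finite : ∀ n, (A.Cand n).Finite
  | 0 => Set.Finite.image2 _ (A.W0).finite_toSet (A.W0).finite_toSet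
  | n+1 => sums_finite (cand_finite n) _

lemma cand_mono_succ (n : ℕ) : A.Cand n ⊆ A.Cand (n+1) :=
  fun x hx => mem_sums_succ_of_mem hx _

lemma cand_mono {m n : ℕ} (h : m ≤ n) : A.Cand m ⊆ A.Cand n := by
  induction h with
  | refl => exact subset_rfl
  | step _ ih => exact ih.trans (A.cand_mono_succ _)

variable {A}

/-- the set of interior states of a run -/
def intSt (w : Q) (es : List (Q × α × ℝ≥0∞ × Q)) : Finset Q :=
  ((List.range (es.length - 1)).map (fun k => stAt w es (k+1))).toFinset

lemma stAt_mem_intSt (w : Q) (es : List (Q × α × ℝ≥0∞ × Q)) {j : ℕ} (h0 : j ≠ 0)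
    (hj : j < es.length) : stAt w es j ∈ intSt w es := by
  simp only [intSt, List.mem_toFinset, List.mem_map, List.mem_range]
  exact ⟨j - 1, by omega, by congr 1; omega⟩

lemma mem_intSt_elim {w : Q} {es : List (Q × α × ℝ≥0∞ × Q)} {x : Q} (h : x ∈ intSt w es) :
    ∃ j, j ≠ 0 ∧ j < es.length ∧ x = stAt w es j := by
  simp only [intSt, List.mem_toFinset, List.mem_map, List.mem_range] at h
  obtain ⟨k, hk, rfl⟩ := h
  exact ⟨k + 1, by omega, by omega, rfl⟩

lemma stAt_take (p : Q) (es : List (Q × α × ℝ≥0∞ × Q)) {k K : ℕ} (h : k ≤ K) :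
    stAt p (es.take K) k = stAt p es k := by
  simp only [stAt, List.take_take, min_eq_left h]

/-- side conditions carried through the induction -/
def Side (A : WFA α ℝ≥0∞ Q) (R : Q → Q → Prop) (u u' w v v' w' : Q) : Prop :=
  (∃ x₀ : List α, ∃ i ∈ A.I, ∃ i' ∈ A.I, ∃ i'' ∈ A.I,
     A.PathTo i x₀ u ∧ A.PathTo i' x₀ u' ∧ A.PathTo i'' x₀ w) ∧
  (∃ s : List α, ∃ pp pp' qh : Q,
     A.PathTo v s pp ∧ A.PathTo v' s pp' ∧ A.PathTo w' s qh ∧ R pp qh ∧ R pp' qh)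

/-- the statement of the core lemma at level `n` -/
def CoreStmt (A : WFA α ℝ≥0∞ Q) (R : Q → Q → Prop) (n : ℕ) : Prop :=
  ∀ (z : List α) (u v u' v' w w' : Q) (esr : List (Q × α × ℝ≥0∞ × Q)),
    A.IsRun w esr w' → lbl esr = z →
    (intSt w esr).card ≤ n →
    A.Wt u z v ≠ ⊤ → A.Wt u' z v' ≠ ⊤ →
    Side A R u u' w v v' w' →
    (A.Wt u z v).toReal - (A.Wt u' z v').toReal ∈ A.Cand n

end WFA

namespace WFA

variable {α Q : Type} [DecidableEq Q] [DecidableEq α] {A : WFA α ℝ≥0∞ Q}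

lemma coreAux_nocut {R : Q → Q → Prop} {n : ℕ} (hIH : CoreStmt A R n)
    {z : List α} {u v u' v' w w' σ : Q} {esr : List (Q × α × ℝ≥0∞ × Q)}
    (hrunr : A.IsRun w esr w') (hlblr : lbl esr = z)
    (hcard : ((intSt w esr).erase σ).card ≤ n)
    (hW : A.Wt u z v ≠ ⊤) (hW' : A.Wt u' z v' ≠ ⊤)
    (hside : Side A R u u' w v v' w')
    (hnc : ∀ k, k ≠ 0 → k < z.length → stAt w esr k ≠ σ) :
    (A.Wt u z v).toReal - (A.Wt u' z v').toReal ∈ A.Cand n := by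
  have hlen : esr.length = z.length := by rw [← hlblr, lbl_length]
  have hσ : σ ∉ intSt w esr := by
    intro hmem
    obtain ⟨j, hj0, hjl, hjeq⟩ := mem_intSt_elim hmem
    exact hnc j hj0 (by omega) hjeq.symm
  rw [Finset.erase_eq_of_notMem hσ] at hcard
  exact hIH z u v u' v' w w' esr hrunr hlblr hcard hW hW' hside

lemma coreAux {R : Q → Q → Prop} (hAdm : A.Admissible R) (htw : A.RWeakTwins R)
    {n : ℕ} (hIH : CoreStmt A R n) :
    ∀ (m : ℕ) (z : List α) (u v u' v' w w' σ : Q)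
      (esp esp' esr : List (Q × α × ℝ≥0∞ × Q)),
      A.IsRun u esp v → lbl esp = z → cost esp = A.Wt u z v → A.Wt u z v ≠ ⊤ →
      A.IsRun u' esp' v' → lbl esp' = z → cost esp' = A.Wt u' z v' → A.Wt u' z v' ≠ ⊤ →
      A.IsRun w esr w' → lbl esr = z →
      ((intSt w esr).erase σ).card ≤ n →
      (((Finset.range z.length).filter
          (fun k => k ≠ 0 ∧ stAt w esr k = σ)).image
          (fun k => (stAt u esp k, stAt u' esp' k))).card ≤ m →
      Side A R u u' w v v' w' →
      (A.Wt u z v).toReal - (A.Wt u' z v').toReal ∈ sums (A.Cand n) (m + 1) := by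
  intro m
  induction m with
  | zero =>
    intro z u v u' v' w w' σ esp esp' esr hrunp hlblp hcostp hW hrunp' hlblp' hcostp' hW'
      hrunr hlblr hcard hm hside
    -- no cuts at all
    have hcuts : ((Finset.range z.length).filter
        (fun k => k ≠ 0 ∧ stAt w esr k = σ)) = ∅ := by
      by_contra hne
      obtain ⟨k, hk⟩ := Finset.nonempty_of_ne_empty hne
      have : ((((Finset.range z.length).filter
          (fun k => k ≠ 0 ∧ stAt w esr k = σ)).image
          (fun k => (stAt u esp k, stAt u' esp' k)))).Nonempty :=
        ⟨_, Finset.mem_image_of_mem _ hk⟩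
      have := Finset.card_pos.mpr this
      omega
    have hnc : ∀ k, k ≠ 0 → k < z.length → stAt w esr k ≠ σ := by
      intro k hk0 hkl hkeq
      have : k ∈ (Finset.range z.length).filter
          (fun k => k ≠ 0 ∧ stAt w esr k = σ) :=
        Finset.mem_filter.mpr ⟨Finset.mem_range.mpr hkl, hk0, hkeq⟩
      rw [hcuts] at this
      exact absurd this (Finset.notMem_empty _)
    exact mem_sums_succ_of_mem
      (coreAux_nocut hIH hrunr hlblr hcard hW hW' hside hnc) 0
  | succ m ihm =>
    intro z u v u' v' w w' σ esp esp' esr hrunp hlblp hcostp hW hrunp' hlblp' hcostp' hW'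
      hrunr hlblr hcard hm hside
    set cuts := (Finset.range z.length).filter
        (fun k => k ≠ 0 ∧ stAt w esr k = σ) with hcutsdef
    rcases cuts.eq_empty_or_nonempty with hemp | hne
    · -- no cuts
      have hnc : ∀ k, k ≠ 0 → k < z.length → stAt w esr k ≠ σ := by
        intro k hk0 hkl hkeq
        have : k ∈ cuts := Finset.mem_filter.mpr ⟨Finset.mem_range.mpr hkl, hk0, hkeq⟩
        rw [hemp] at this
        exact absurd this (Finset.notMem_empty _)
      exact mem_sums_succ_of_mem
        (coreAux_nocut hIH hrunr hlblr hcard hW hW' hside hnc) (m+1)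
    · -- peel
      obtain ⟨⟨x₀, i, hi, i', hi', i'', hi'', hpu, hpu', hpw⟩,
        ⟨s, pp, pp', qh, hvpp, hv'pp', hw'qh, hR1, hR2⟩⟩ := hside
      have hlenp : esp.length = z.length := by rw [← hlblp, lbl_length]
      have hlenp' : esp'.length = z.length := by rw [← hlblp', lbl_length]
      have hlenr : esr.length = z.length := by rw [← hlblr, lbl_length]
      set c0 := cuts.min' hne with hc0def
      have hc0mem : c0 ∈ cuts := cuts.min'_mem hne
      have hc0facts := Finset.mem_filter.mp hc0mem
      have hc0lt : c0 < z.length := Finset.mem_range.mp hc0facts.1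
      have hc0ne : c0 ≠ 0 := hc0facts.2.1
      have hc0σ : stAt w esr c0 = σ := hc0facts.2.2
      set cutsP := cuts.filter
          (fun k => stAt u esp k = stAt u esp c0 ∧ stAt u' esp' k = stAt u' esp' c0)
        with hcutsPdef
      have hcPne : cutsP.Nonempty := ⟨c0, Finset.mem_filter.mpr ⟨hc0mem, rfl, rfl⟩⟩
      set j0 := cutsP.max' hcPne with hj0def
      have hj0memP : j0 ∈ cutsP := cutsP.max'_mem hcPne
      have hj0facts := Finset.mem_filter.mp hj0memP
      have hj0mem : j0 ∈ cuts := hj0facts.1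
      have hj0eq1 : stAt u esp j0 = stAt u esp c0 := hj0facts.2.1
      have hj0eq2 : stAt u' esp' j0 = stAt u' esp' c0 := hj0facts.2.2
      have hj0lt : j0 < z.length := Finset.mem_range.mp (Finset.mem_filter.mp hj0mem).1
      have hj0σ : stAt w esr j0 = σ := (Finset.mem_filter.mp hj0mem).2.2
      have hc0j0 : c0 ≤ j0 := cutsP.le_max' c0 (Finset.mem_filter.mpr ⟨hc0mem, rfl, rfl⟩)
      -- abbreviations
      set t0 := stAt u esp c0 with ht0def
      set t0' := stAt u' esp' c0 with ht0'def
      set z1 := z.take c0 with hz1def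
      set y := (z.drop c0).take (j0 - c0) with hydef
      set z2 := z.drop j0 with hz2def
      -- splits of esp
      have hfinp : cost esp ≠ ⊤ := by rw [hcostp]; exact hW
      have hcostp2 : cost esp = A.Wt u (lbl esp) v := by rw [hlblp]; exact hcostp
      have hs1 := exact_split hrunp hcostp2 hfinp c0
      have hrun_dp : A.IsRun t0 (esp.drop c0) v := (isRun_take_drop hrunp c0).2
      have hfin_dp : cost (esp.drop c0) ≠ ⊤ := by
        intro ht
        apply hfinp
        rw [← cost_take_add_drop esp c0, ht, add_top]
      have hs2 := exact_split hrun_dp hs1.2 hfin_dp (j0 - c0)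
      have hstj0 : stAt t0 (esp.drop c0) (j0 - c0) = t0 := by
        rw [ht0def, ← stAt_add]
        have : c0 + (j0 - c0) = j0 := by omega
        rw [this, hj0eq1]
      have hdd : (esp.drop c0).drop (j0 - c0) = esp.drop j0 := by
        rw [List.drop_drop]
        congr 1
        omega
      -- label computations
      have hlbl_t : lbl (esp.take c0) = z1 := by rw [lbl_take, hlblp]
      have hlbl_m : lbl ((esp.drop c0).take (j0 - c0)) = y := by
        rw [lbl_take, lbl_drop, hlblp]
      have hlbl_d : lbl (esp.drop j0) = z2 := by rw [lbl_drop, hlblp]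
      -- the three exact weights for esp
      have hW1 : cost (esp.take c0) = A.Wt u z1 t0 := by
        rw [hs1.1, hlbl_t]
      have hWy : cost ((esp.drop c0).take (j0 - c0)) = A.Wt t0 y t0 := by
        rw [hs2.1, hlbl_m, hstj0]
      have hW2 : cost (esp.drop j0) = A.Wt t0 z2 v := by
        have := hs2.2
        rw [hstj0, hdd, hlbl_d] at this
        exact this
      have hdecomp : A.Wt u z v = A.Wt u z1 t0 + A.Wt t0 y t0 + A.Wt t0 z2 v := by
        rw [← hcostp, ← cost_take_add_drop esp c0, ← cost_take_add_drop (esp.drop c0) (j0 - c0),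
          hdd, hW1, hWy, hW2, add_assoc]
      -- splits of esp'
      have hfinp' : cost esp' ≠ ⊤ := by rw [hcostp']; exact hW'
      have hcostp2' : cost esp' = A.Wt u' (lbl esp') v' := by rw [hlblp']; exact hcostp'
      have hs1' := exact_split hrunp' hcostp2' hfinp' c0
      have hrun_dp' : A.IsRun t0' (esp'.drop c0) v' := (isRun_take_drop hrunp' c0).2
      have hfin_dp' : cost (esp'.drop c0) ≠ ⊤ := by
        intro ht
        apply hfinp'
        rw [← cost_take_add_drop esp' c0, ht, add_top]
      have hs2' := exact_split hrun_dp' hs1'.2 hfin_dp' (j0 - c0)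
      have hstj0' : stAt t0' (esp'.drop c0) (j0 - c0) = t0' := by
        rw [ht0'def, ← stAt_add]
        have : c0 + (j0 - c0) = j0 := by omega
        rw [this, hj0eq2]
      have hdd' : (esp'.drop c0).drop (j0 - c0) = esp'.drop j0 := by
        rw [List.drop_drop]
        congr 1
        omega
      have hlbl_t' : lbl (esp'.take c0) = z1 := by rw [lbl_take, hlblp']
      have hlbl_m' : lbl ((esp'.drop c0).take (j0 - c0)) = y := by
        rw [lbl_take, lbl_drop, hlblp']
      have hlbl_d' : lbl (esp'.drop j0) = z2 := by rw [lbl_drop, hlblp']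
      have hW1' : cost (esp'.take c0) = A.Wt u' z1 t0' := by
        rw [hs1'.1, hlbl_t']
      have hWy' : cost ((esp'.drop c0).take (j0 - c0)) = A.Wt t0' y t0' := by
        rw [hs2'.1, hlbl_m', hstj0']
      have hW2' : cost (esp'.drop j0) = A.Wt t0' z2 v' := by
        have := hs2'.2
        rw [hstj0', hdd', hlbl_d'] at this
        exact this
      have hdecomp' : A.Wt u' z v' = A.Wt u' z1 t0' + A.Wt t0' y t0' + A.Wt t0' z2 v' := by
        rw [← hcostp', ← cost_take_add_drop esp' c0, ← cost_take_add_drop (esp'.drop c0) (j0 - c0),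
          hdd', hW1', hWy', hW2', add_assoc]
      -- anchor run pieces
      have hrunr_t : A.IsRun w (esr.take c0) σ := by
        have := (isRun_take_drop hrunr c0).1
        rw [hc0σ] at this
        exact this
      have hrunr_d : A.IsRun σ (esr.drop c0) w' := by
        have := (isRun_take_drop hrunr c0).2
        rw [hc0σ] at this
        exact this
      have hstrj0 : stAt σ (esr.drop c0) (j0 - c0) = σ := by
        conv_lhs => rw [← hc0σ]
        rw [← stAt_add]
        have : c0 + (j0 - c0) = j0 := by omega
        rw [this, hj0σ]
      have hddr : (esr.drop c0).drop (j0 - c0) = esr.drop j0 := by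
        rw [List.drop_drop]
        congr 1
        omega
      have hrunr_m : A.IsRun σ ((esr.drop c0).take (j0 - c0)) σ := by
        have := (isRun_take_drop hrunr_d (j0 - c0)).1
        rw [hstrj0] at this
        exact this
      have hrunr_d2 : A.IsRun σ (esr.drop j0) w' := by
        have := (isRun_take_drop hrunr_d (j0 - c0)).2
        rw [hstrj0, hddr] at this
        exact this
      have hlblr_m : lbl ((esr.drop c0).take (j0 - c0)) = y := by
        rw [lbl_take, lbl_drop, hlblr]
      have hlblr_d : lbl (esr.drop j0) = z2 := by rw [lbl_drop, hlblr]
      -- cycle paths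
      have hcycσ : A.PathTo σ y σ := by
        have := pathTo_of_isRun hrunr_m
        rw [hlblr_m] at this
        exact this
      have hrunp_m : A.IsRun t0 ((esp.drop c0).take (j0 - c0)) t0 := by
        have := (isRun_take_drop hrun_dp (j0 - c0)).1
        rw [hstj0] at this
        exact this
      have hcyct0 : A.PathTo t0 y t0 := by
        have := pathTo_of_isRun hrunp_m
        rw [hlbl_m] at this
        exact this
      have hrunp_m' : A.IsRun t0' ((esp'.drop c0).take (j0 - c0)) t0' := by
        have := (isRun_take_drop hrun_dp' (j0 - c0)).1
        rw [hstj0'] at this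
        exact this
      have hcyct0' : A.PathTo t0' y t0' := by
        have := pathTo_of_isRun hrunp_m'
        rw [hlbl_m'] at this
        exact this
      -- suffix paths from position j0
      have hrunp_d2 : A.IsRun t0 (esp.drop j0) v := by
        have := (isRun_take_drop hrunp j0).2
        rw [hj0eq1] at this
        exact this
      have hp_t0_v : A.PathTo t0 z2 v := by
        have := pathTo_of_isRun hrunp_d2
        rw [hlbl_d] at this
        exact this
      have hrunp_d2' : A.IsRun t0' (esp'.drop j0) v' := by
        have := (isRun_take_drop hrunp' j0).2
        rw [hj0eq2] at this
        exact this
      have hp_t0'_v' : A.PathTo t0' z2 v' := by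
        have := pathTo_of_isRun hrunp_d2'
        rw [hlbl_d'] at this
        exact this
      have hp_σ_w' : A.PathTo σ z2 w' := by
        have := pathTo_of_isRun hrunr_d2
        rw [hlblr_d] at this
        exact this
      -- prefix paths to position c0 and j0
      have hrunp_t : A.IsRun u (esp.take c0) t0 := (isRun_take_drop hrunp c0).1
      have hrunp_t' : A.IsRun u' (esp'.take c0) t0' := (isRun_take_drop hrunp' c0).1
      have hp_u_t0 : A.PathTo u z1 t0 := by
        have := pathTo_of_isRun hrunp_t
        rw [hlbl_t] at this
        exact this
      have hp_w_σ : A.PathTo w z1 σ := by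
        have := pathTo_of_isRun hrunr_t
        rw [lbl_take, hlblr] at this
        exact this
      have hp_u_t0' : A.PathTo u' z1 t0' := by
        have := pathTo_of_isRun hrunp_t'
        rw [hlbl_t'] at this
        exact this
      -- equality of the middle weights
      have hWyeq : A.Wt t0 y t0 = A.Wt t0' y t0' := by
        by_cases hcj : j0 = c0
        · have hy0 : y = [] := by
            rw [hydef, hcj]
            simp
          rw [hy0]
          show (if t0 = t0 then (0:ℝ≥0∞) else ⊤) = (if t0' = t0' then (0:ℝ≥0∞) else ⊤)
          simp
        · have hclt : c0 < j0 := lt_of_le_of_ne hc0j0 (Ne.symm hcj)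
          have hyne : y ≠ [] := by
            have hylen : y.length = j0 - c0 := by
              rw [hydef, List.length_take, List.length_drop]
              omega
            intro hy0
            rw [hy0] at hylen
            simp at hylen
            omega
          have hRt0σ : R t0 σ :=
            hAdm.1 t0 σ pp qh (z2 ++ s) hR1
              (pathTo_append hp_t0_v hvpp) (pathTo_append hp_σ_w' hw'qh)
          have hRt0'σ : R t0' σ :=
            hAdm.1 t0' σ pp' qh (z2 ++ s) hR2
              (pathTo_append hp_t0'_v' hv'pp') (pathTo_append hp_σ_w' hw'qh)
          have hsib : A.Siblings t0 σ :=
            ⟨⟨x₀ ++ z1, i, i'', hi, hi'', pathTo_append hpu hp_u_t0,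
              pathTo_append hpw hp_w_σ⟩, ⟨y, hyne, hcyct0, hcycσ⟩⟩
          have hsib' : A.Siblings t0' σ :=
            ⟨⟨x₀ ++ z1, i', i'', hi', hi'', pathTo_append hpu' hp_u_t0',
              pathTo_append hpw hp_w_σ⟩, ⟨y, hyne, hcyct0', hcycσ⟩⟩
          have h1 := htw t0 σ hsib hRt0σ y hcyct0 hcycσ
          have h2 := htw t0' σ hsib' hRt0'σ y hcyct0' hcycσ
          rw [h1, h2]
      -- finiteness of pieces
      have hfin3 : A.Wt u z1 t0 + A.Wt t0 y t0 + A.Wt t0 z2 v ≠ ⊤ := by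
        rw [← hdecomp]; exact hW
      have hf1 : A.Wt u z1 t0 ≠ ⊤ := by
        intro ht; apply hfin3; rw [ht]; simp
      have hfy : A.Wt t0 y t0 ≠ ⊤ := by
        intro ht; apply hfin3; rw [ht]; simp
      have hf2 : A.Wt t0 z2 v ≠ ⊤ := by
        intro ht; apply hfin3; rw [ht]; simp
      have hfin3' : A.Wt u' z1 t0' + A.Wt t0' y t0' + A.Wt t0' z2 v' ≠ ⊤ := by
        rw [← hdecomp']; exact hW'
      have hf1' : A.Wt u' z1 t0' ≠ ⊤ := by
        intro ht; apply hfin3'; rw [ht]; simp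
      have hfy' : A.Wt t0' y t0' ≠ ⊤ := by
        intro ht; apply hfin3'; rw [ht]; simp
      have hf2' : A.Wt t0' z2 v' ≠ ⊤ := by
        intro ht; apply hfin3'; rw [ht]; simp
      -- real arithmetic
      have harith : (A.Wt u z v).toReal - (A.Wt u' z v').toReal
          = ((A.Wt u z1 t0).toReal - (A.Wt u' z1 t0').toReal)
            + ((A.Wt t0 z2 v).toReal - (A.Wt t0' z2 v').toReal) := by
        rw [hdecomp, hdecomp']
        rw [ENNReal.toReal_add (ENNReal.add_ne_top.mpr ⟨hf1, hfy⟩) hf2,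
          ENNReal.toReal_add hf1 hfy,
          ENNReal.toReal_add (ENNReal.add_ne_top.mpr ⟨hf1', hfy'⟩) hf2',
          ENNReal.toReal_add hf1' hfy', hWyeq]
        ring
      -- first piece: apply the level-n statement
      have hfirst : (A.Wt u z1 t0).toReal - (A.Wt u' z1 t0').toReal ∈ A.Cand n := by
        apply hIH z1 u t0 u' t0' w σ (esr.take c0) hrunr_t (by rw [lbl_take, hlblr])
        · -- interior card
          have hsub : intSt w (esr.take c0) ⊆ (intSt w esr).erase σ := by
            intro x hx
            obtain ⟨j, hj0, hjl, hjeq⟩ := mem_intSt_elim hx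
            have hjlc : j < c0 := by
              have : (esr.take c0).length = c0 := by
                rw [List.length_take]
                omega
              omega
            have hx2 : x = stAt w esr j := by
              rw [hjeq, stAt_take w esr (le_of_lt hjlc)]
            have hxmem : x ∈ intSt w esr := by
              rw [hx2]
              exact stAt_mem_intSt w esr hj0 (by omega)
            have hxne : x ≠ σ := by
              intro hxeq
              have : j ∈ cuts := by
                rw [hcutsdef]
                refine Finset.mem_filter.mpr ⟨Finset.mem_range.mpr (by omega), hj0, ?_⟩
                rw [← hx2, hxeq]
              have := cuts.min'_le j this
              omega
            exact Finset.mem_erase.mpr ⟨hxne, hxmem⟩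
          calc (intSt w (esr.take c0)).card ≤ ((intSt w esr).erase σ).card :=
                Finset.card_le_card hsub
            _ ≤ n := hcard
        · exact hf1
        · exact hf1'
        · exact ⟨⟨x₀, i, hi, i', hi', i'', hi'', hpu, hpu', hpw⟩,
            ⟨z2 ++ s, pp, pp', qh, pathTo_append hp_t0_v hvpp,
              pathTo_append hp_t0'_v' hv'pp', pathTo_append hp_σ_w' hw'qh, hR1, hR2⟩⟩
      -- second piece: apply the induction hypothesis on m
      have hsecond : (A.Wt t0 z2 v).toReal - (A.Wt t0' z2 v').toReal
          ∈ sums (A.Cand n) (m + 1) := by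
        apply ihm z2 t0 v t0' v' σ w' σ (esp.drop j0) (esp'.drop j0) (esr.drop j0)
          hrunp_d2 hlbl_d hW2 hf2
          hrunp_d2' hlbl_d' hW2' hf2'
          hrunr_d2 hlblr_d
        · -- interior card of the dropped anchor run
          have hsub : intSt σ (esr.drop j0) ⊆ intSt w esr := by
            intro x hx
            obtain ⟨j, hj0', hjl, hjeq⟩ := mem_intSt_elim hx
            have hlen2 : (esr.drop j0).length = esr.length - j0 := List.length_drop
            have hx2 : x = stAt w esr (j0 + j) := by
              rw [hjeq, stAt_add, hj0σ]
            rw [hx2]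
            exact stAt_mem_intSt w esr (by omega) (by omega)
          calc ((intSt σ (esr.drop j0)).erase σ).card
              ≤ ((intSt w esr).erase σ).card :=
                Finset.card_le_card (Finset.erase_subset_erase σ hsub)
            _ ≤ n := hcard
        · -- pair measure decreased
          have hP0mem : (t0, t0') ∈ (cuts.image (fun k => (stAt u esp k, stAt u' esp' k))) := by
            refine Finset.mem_image.mpr ⟨c0, hc0mem, ?_⟩
            rw [← ht0def, ← ht0'def]
          have hsub : ((Finset.range z2.length).filter
                (fun k => k ≠ 0 ∧ stAt σ (esr.drop j0) k = σ)).image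
                (fun k => (stAt t0 (esp.drop j0) k, stAt t0' (esp'.drop j0) k))
              ⊆ (cuts.image (fun k => (stAt u esp k, stAt u' esp' k))).erase (t0, t0') := by
            intro x hx
            obtain ⟨k, hk, hkeq⟩ := Finset.mem_image.mp hx
            obtain ⟨hkr, hk0, hkσ⟩ := Finset.mem_filter.mp hk
            have hkr2 : k < z2.length := Finset.mem_range.mp hkr
            have hz2len : z2.length = z.length - j0 := by
              rw [hz2def, List.length_drop]
            have hKmem : j0 + k ∈ cuts := by
              rw [hcutsdef]
              refine Finset.mem_filter.mpr ⟨Finset.mem_range.mpr (by omega), by omega, ?_⟩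
              rw [stAt_add, hj0σ]
              exact hkσ
            have hpair : (stAt t0 (esp.drop j0) k, stAt t0' (esp'.drop j0) k)
                = (stAt u esp (j0 + k), stAt u' esp' (j0 + k)) := by
              rw [stAt_add, stAt_add, hj0eq1, hj0eq2]
            have hne0 : (stAt u esp (j0 + k), stAt u' esp' (j0 + k)) ≠ (t0, t0') := by
              intro heq
              have hmemP : j0 + k ∈ cutsP := by
                rw [hcutsPdef]
                refine Finset.mem_filter.mpr ⟨hKmem, ?_, ?_⟩
                · exact congrArg Prod.fst heq
                · exact congrArg Prod.snd heq
              have := cutsP.le_max' (j0 + k) hmemP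
              omega
            rw [← hkeq] at *
            refine Finset.mem_erase.mpr ⟨by rw [hpair]; exact hne0, ?_⟩
            rw [hpair]
            exact Finset.mem_image.mpr ⟨j0 + k, hKmem, rfl⟩
          have hcarderase : ((cuts.image (fun k => (stAt u esp k, stAt u' esp' k))).erase
              (t0, t0')).card ≤ m := by
            have := Finset.card_erase_of_mem hP0mem
            omega
          calc (((Finset.range z2.length).filter
                (fun k => k ≠ 0 ∧ stAt σ (esr.drop j0) k = σ)).image
                (fun k => (stAt t0 (esp.drop j0) k, stAt t0' (esp'.drop j0) k))).card
              ≤ _ := Finset.card_le_card hsub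
            _ ≤ m := hcarderase
        · exact ⟨⟨x₀ ++ z1, i, hi, i', hi', i'', hi'',
            pathTo_append hpu hp_u_t0, pathTo_append hpu' hp_u_t0', pathTo_append hpw hp_w_σ⟩,
            ⟨s, pp, pp', qh, hvpp, hv'pp', hw'qh, hR1, hR2⟩⟩
      rw [harith]
      exact add_mem_sums hfirst hsecond

end WFA

namespace WFA

variable {α Q : Type} [DecidableEq Q] [DecidableEq α] {A : WFA α ℝ≥0∞ Q}

lemma cand_zero_mem {u v u' v' : Q} {z : List α} (hz : z.length ≤ 1) :
    (A.Wt u z v).toReal - (A.Wt u' z v').toReal ∈ A.Cand 0 :=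
  ⟨A.Wt u z v, Finset.mem_coe.mpr (wt_short_mem hz),
   A.Wt u' z v', Finset.mem_coe.mpr (wt_short_mem hz), rfl⟩

lemma core {R : Q → Q → Prop} (hAdm : A.Admissible R) (htw : A.RWeakTwins R) :
    ∀ n, CoreStmt A R n := by
  intro n
  induction n with
  | zero =>
    intro z u v u' v' w w' esr hrunr hlblr hcard hW hW' hside
    have hlen : esr.length = z.length := by rw [← hlblr, lbl_length]
    have hz : z.length ≤ 1 := by
      by_contra hz2
      push_neg at hz2
      have h1 : stAt w esr 1 ∈ intSt w esr := stAt_mem_intSt w esr one_ne_zero (by omega)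
      have := Finset.card_pos.mpr ⟨_, h1⟩
      omega
    exact cand_zero_mem hz
  | succ n ihn =>
    intro z u v u' v' w w' esr hrunr hlblr hcard hW hW' hside
    by_cases hz : z.length ≤ 1
    · exact A.cand_mono (Nat.zero_le _) (cand_zero_mem hz)
    · push_neg at hz
      have hlen : esr.length = z.length := by rw [← hlblr, lbl_length]
      set σ := stAt w esr 1 with hσdef
      have hσmem : σ ∈ intSt w esr := stAt_mem_intSt w esr one_ne_zero (by omega)
      obtain ⟨esp, hrunp, hlblp, hcostp⟩ := wt_attained hW
      obtain ⟨esp', hrunp', hlblp', hcostp'⟩ := wt_attained hW'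
      have hlenp : esp.length = z.length := by rw [← hlblp, lbl_length]
      have hlenp' : esp'.length = z.length := by rw [← hlblp', lbl_length]
      have hcard2 : ((intSt w esr).erase σ).card ≤ n := by
        have := Finset.card_erase_of_mem hσmem
        have := Finset.card_pos.mpr ⟨_, hσmem⟩
        omega
      have hpairs : (((Finset.range z.length).filter
          (fun k => k ≠ 0 ∧ stAt w esr k = σ)).image
          (fun k => (stAt u esp k, stAt u' esp' k))).card ≤ A.Bnd := by
        set T := A.E.image (fun e => e.2.2.2) with hT
        have hsub : (((Finset.range z.length).filter
            (fun k => k ≠ 0 ∧ stAt w esr k = σ)).image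
            (fun k => (stAt u esp k, stAt u' esp' k))) ⊆ T ×ˢ T := by
          intro x hx
          obtain ⟨k, hk, hkeq⟩ := Finset.mem_image.mp hx
          obtain ⟨hkr, hk0, _⟩ := Finset.mem_filter.mp hk
          have hkl : k < z.length := Finset.mem_range.mp hkr
          rw [← hkeq]
          exact Finset.mem_product.mpr
            ⟨stAt_mem_targets hrunp k hk0 (by omega),
             stAt_mem_targets hrunp' k hk0 (by omega)⟩
        calc _ ≤ (T ×ˢ T).card := Finset.card_le_card hsub
          _ = T.card * T.card := Finset.card_product T T
          _ = A.Bnd := by rw [Bnd, sq]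
      have hres := coreAux hAdm htw ihn A.Bnd z u v u' v' w w' σ esp esp' esr
        hrunp hlblp hcostp hW hrunp' hlblp' hcostp' hW'
        hrunr hlblr hcard2 hpairs hside
      exact hres

end WFA

namespace WFA

variable {α Q : Type} [DecidableEq Q] [DecidableEq α] (A : WFA α ℝ≥0∞ Q)

/-- all states reachable from initial states -/
noncomputable def QrS : Finset Q := A.I ∪ A.E.image (fun e => e.2.2.2)

variable {A}

lemma dstep_subset_QrS (U : Finset Q) (a : α) : A.dstep U a ⊆ A.QrS := by
  intro q hq
  simp only [dstep, Finset.mem_image] at hq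
  obtain ⟨e, he, rfl⟩ := hq
  exact Finset.mem_union_right _ (Finset.mem_image_of_mem _ (Finset.mem_filter.mp he).1)

lemma reach_subset_QrS (x : List α) : ∀ (U : Finset Q), U ⊆ A.QrS → A.reach U x ⊆ A.QrS := by
  induction x with
  | nil => exact fun U hU => hU
  | cons a x ih => exact fun U _ => ih _ (dstep_subset_QrS U a)

lemma reach_I_subset_QrS (x : List α) : A.reach A.I x ⊆ A.QrS :=
  reach_subset_QrS x A.I Finset.subset_union_left

variable (A) in
/-- the finite set of all possible residual values -/
noncomputable def VSet : Set ℝ≥0∞ :=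
  insert ⊤ (insert 0 (ENNReal.ofReal ''
    (Set.image2 (· + ·)
      (Set.image2 (fun i i' => (A.lam i).toReal - (A.lam i').toReal) (A.I : Set Q) (A.I : Set Q))
      (A.Cand ((A.E.image (fun e => e.2.2.2)).card)))))

lemma vset_finite : (A.VSet).Finite := by
  refine Set.Finite.insert _ (Set.Finite.insert _ (Set.Finite.image _ ?_))
  exact Set.Finite.image2 _
    (Set.Finite.image2 _ A.I.finite_toSet A.I.finite_toSet)
    (A.cand_finite _)

lemma wit_attained {x : List α} {p : Q} (h : A.WIt x p ≠ ⊤) :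
    ∃ i ∈ A.I, A.WIt x p = A.lam i + A.Wt i x p := by
  have hne : A.I.Nonempty := by
    rcases A.I.eq_empty_or_nonempty with he | hne
    · exfalso; apply h; show A.I.inf _ = ⊤; rw [he]; simp
    · exact hne
  obtain ⟨i, hi, heq⟩ := Finset.exists_mem_eq_inf A.I hne (fun i => A.lam i + A.Wt i x p)
  exact ⟨i, hi, heq⟩

lemma sT_mem_VSet {R : Q → Q → Prop} [DecidableRel R] (hAdm : A.Admissible R)
    (htw : A.RWeakTwins R) {x : List α} {q : Q} (hq : q ∈ A.reach A.I x) (p : Q) :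
    A.sT R x q p ∈ A.VSet := by
  by_cases hpd : p ∈ A.deltaR R x q
  swap
  · rw [sT, if_neg hpd]
    exact Set.mem_insert _ _
  rw [sT, if_pos hpd]
  set b := (A.deltaR R x q).inf (fun p' => A.WIt x p') with hbdef
  have hble : b ≤ A.WIt x p := Finset.inf_le hpd
  by_cases hWp : A.WIt x p = ⊤
  · by_cases hb : b = ⊤
    · rw [hWp, hb, ENNReal.sub_top]
      exact Set.mem_insert_of_mem _ (Set.mem_insert _ _)
    · rw [hWp, ENNReal.top_sub hb]
      exact Set.mem_insert _ _
  · have hbne : b ≠ ⊤ := ne_top_of_le_ne_top hWp hble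
    obtain ⟨p0, hp0mem, hp0eq⟩ := Finset.exists_mem_eq_inf (A.deltaR R x q)
      ⟨p, hpd⟩ (fun p' => A.WIt x p')
    have hWp0 : A.WIt x p0 = b := hp0eq.symm
    have hWp0ne : A.WIt x p0 ≠ ⊤ := by rw [hWp0]; exact hbne
    obtain ⟨i, hiI, hieq⟩ := wit_attained hWp
    obtain ⟨i', hi'I, hi'eq⟩ := wit_attained hWp0ne
    have hlamine : A.lam i ≠ ⊤ := by
      intro ht; apply hWp; rw [hieq, ht, top_add]
    have hWtine : A.Wt i x p ≠ ⊤ := by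
      intro ht; apply hWp; rw [hieq, ht, add_top]
    have hlami'ne : A.lam i' ≠ ⊤ := by
      intro ht; apply hWp0ne; rw [hi'eq, ht, top_add]
    have hWti'ne : A.Wt i' x p0 ≠ ⊤ := by
      intro ht; apply hWp0ne; rw [hi'eq, ht, add_top]
    obtain ⟨i'', hi''I, hpath⟩ := exists_pathTo_of_mem_reach hq
    obtain ⟨esr, hrunr, hlblr⟩ := isRun_of_pathTo hpath
    have hcard : (intSt i'' esr).card ≤ (A.E.image (fun e => e.2.2.2)).card := by
      apply Finset.card_le_card
      intro y hy
      obtain ⟨j, hj0, hjl, hjeq⟩ := mem_intSt_elim hy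
      rw [hjeq]
      exact stAt_mem_targets hrunr j hj0 (le_of_lt hjl)
    have hRpq : R p q := (Finset.mem_filter.mp hpd).2
    have hRp0q : R p0 q := (Finset.mem_filter.mp hp0mem).2
    have hside : Side A R i i' i'' p p0 q :=
      ⟨⟨[], i, hiI, i', hi'I, i'', hi''I, PathTo.nil i, PathTo.nil i', PathTo.nil i''⟩,
       ⟨[], p, p0, q, PathTo.nil p, PathTo.nil p0, PathTo.nil q, hRpq, hRp0q⟩⟩
    have hd := core hAdm htw ((A.E.image (fun e => e.2.2.2)).card) x i p i' p0 i'' q esr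
      hrunr hlblr hcard hWtine hWti'ne hside
    have hsub_eq : A.WIt x p - b = ENNReal.ofReal ((A.WIt x p).toReal - b.toReal) := by
      rw [← ENNReal.toReal_sub_of_le hble hWp, ENNReal.ofReal_toReal (ENNReal.sub_ne_top hWp)]
    have hreal : (A.WIt x p).toReal - b.toReal
        = ((A.lam i).toReal - (A.lam i').toReal)
          + ((A.Wt i x p).toReal - (A.Wt i' x p0).toReal) := by
      rw [← hWp0, hieq, hi'eq, ENNReal.toReal_add hlamine hWtine,
        ENNReal.toReal_add hlami'ne hWti'ne]
      ring
    rw [hsub_eq, hreal]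
    refine Set.mem_insert_of_mem _ (Set.mem_insert_of_mem _ (Set.mem_image_of_mem _ ?_))
    exact Set.mem_image2_of_mem
      (Set.mem_image2_of_mem (Finset.mem_coe.mpr hiI) (Finset.mem_coe.mpr hi'I)) hd

lemma sts_finite {R : Q → Q → Prop} [DecidableRel R] (hAdm : A.Admissible R)
    (htw : A.RWeakTwins R) : (A.Sts R).Finite := by
  classical
  have hV : (A.VSet).Finite := vset_finite
  set Vf : Finset ℝ≥0∞ := hV.toFinset with hVf
  set Qr := A.QrS with hQr
  let G : (({pp // pp ∈ Qr}) → {y // y ∈ Vf}) → (Q → ℝ≥0∞) :=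
    fun h p => if hp : p ∈ Qr then (h ⟨p, hp⟩ : {y // y ∈ Vf}).1 else ⊤
  have hGfin : (Set.range G).Finite := Set.finite_range G
  have hFs : {f : Q → ℝ≥0∞ | ∃ x q, q ∈ A.reach A.I x ∧ f = A.sT R x q} ⊆ Set.range G := by
    rintro f ⟨x, q, hq, rfl⟩
    refine ⟨fun pp => ⟨A.sT R x q pp.1, hV.mem_toFinset.mpr (sT_mem_VSet hAdm htw hq pp.1)⟩, ?_⟩
    funext p
    show (if hp : p ∈ Qr then _ else ⊤) = A.sT R x q p
    split_ifs with hp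
    · rfl
    · have hnd : p ∉ A.deltaR R x q := by
        intro hmem
        exact hp (reach_I_subset_QrS x (Finset.mem_filter.mp hmem).1)
      rw [sT, if_neg hnd]
  have hfunfin := hGfin.subset hFs
  apply Set.Finite.subset
    (Set.Finite.prod (Qr.finite_toSet)
      (Set.Finite.prod (Qr.powerset.finite_toSet) hfunfin))
  rintro ⟨q, D, f⟩ ⟨x, hq, hD, hf⟩
  refine Set.mem_prod.mpr ⟨reach_I_subset_QrS x hq, Set.mem_prod.mpr ⟨?_, ⟨x, q, hq, hf⟩⟩⟩
  show D ∈ (Qr.powerset : Finset (Finset Q))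
  rw [Finset.mem_powerset]
  rw [show D = A.deltaR R x q from hD]
  exact (Finset.filter_subset _ _).trans (reach_I_subset_QrS x)

end WFA
/-- **Theorem 2.** A weighted automaton over the tropical semiring that
satisfies the `R`-weak twins property for an admissible relation `R` is
`R`-pre-disambiguable: the construction produces finitely many distinct states. -/
theorem rweakTwins_implies_predisambiguable {α Q : Type} [DecidableEq Q] [DecidableEq α]
    (A : WFA α ℝ≥0∞ Q) (R : Q → Q → Prop) [DecidableRel R]
    (hAdm : A.Admissible R) (h : A.RWeakTwins R) :
    A.RPredisambiguable R := WFA.sts_finite hAdm h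
end

section
/- Let A be a weighted automaton over the tropical semiring that is determinizable (weighted determinization terminates, producing finitely many weighted subsets). Then A is R-pre-disambiguable for every admissible relation R. -/
open scoped ENNReal

namespace WFA

variable {α Q : Type} [DecidableEq Q] [DecidableEq α]

/-- The weighted subset constructed by weighted determinization for the string `x`:
each state `p ∈ δ(I, x)` carries the residual `W_I(x,p) − min_{p' ∈ δ(I,x)} W_I(x,p')`
(absent states carry `+∞ = 0̄`). -/
noncomputable def detSub (A : WFA α ℝ≥0∞ Q) (x : List α) : Q → ℝ≥0∞ :=
  fun p => if p ∈ A.reach A.I x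
    then A.WIt x p - (A.reach A.I x).inf (fun p' => A.WIt x p')
    else ⊤

/-- `A` is determinizable: weighted determinization terminates, i.e. only finitely many
distinct weighted subsets arise over all strings. -/
noncomputable def Determinizable (A : WFA α ℝ≥0∞ Q) : Prop :=
  Set.Finite {f : Q → ℝ≥0∞ | ∃ x : List α, (A.reach A.I x).Nonempty ∧ f = A.detSub x}

end WFA

namespace WFA

variable {α Q : Type} [DecidableEq Q] [DecidableEq α]

lemma reach_subset' (A : WFA α ℝ≥0∞ Q) :
    ∀ (x : List α) (U : Finset Q), U ⊆ A.I ∪ A.E.image (fun e => e.2.2.2) →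
      A.reach U x ⊆ A.I ∪ A.E.image (fun e => e.2.2.2)
  | [], U, h => h
  | a :: x, U, h => reach_subset' A x _ (by
      intro p hp
      simp only [dstep, Finset.mem_image] at hp
      obtain ⟨e, he, rfl⟩ := hp
      exact Finset.mem_union_right _ (Finset.mem_image_of_mem _ (Finset.mem_filter.mp he).1))

lemma sT_eq' (A : WFA α ℝ≥0∞ Q) (R : Q → Q → Prop) [DecidableRel R]
    (x : List α) (q p : Q) :
    A.sT R x q p =
      if p ∈ A.deltaR R x q
      then A.detSub x p - (A.deltaR R x q).inf (A.detSub x)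
      else ⊤ := by
  unfold sT
  by_cases hp : p ∈ A.deltaR R x q
  · rw [if_pos hp, if_pos hp]
    set D := A.deltaR R x q with hD
    set m := (A.reach A.I x).inf (fun p' => A.WIt x p') with hm
    set mq := D.inf (fun p' => A.WIt x p') with hmq
    have hDsub : D ⊆ A.reach A.I x := Finset.filter_subset _ _
    have hm_le : m ≤ mq := Finset.inf_mono hDsub
    have hdet_on : ∀ r ∈ D, A.detSub x r = A.WIt x r - m := by
      intro r hr
      simp [detSub, hDsub hr, hm]
    have hinf : D.inf (A.detSub x) = mq - m := by
      obtain ⟨p₀, hp₀, hval⟩ := Finset.exists_mem_eq_inf D ⟨p, hp⟩ (fun p' => A.WIt x p')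
      apply le_antisymm
      · calc D.inf (A.detSub x) ≤ A.detSub x p₀ := Finset.inf_le hp₀
          _ = mq - m := by rw [hdet_on p₀ hp₀, ← hval]
      · refine Finset.le_inf fun r hr => ?_
        rw [hdet_on r hr]
        exact tsub_le_tsub_right (Finset.inf_le hr) m
    rw [hinf, hdet_on p hp, tsub_tsub, add_tsub_cancel_of_le hm_le]
  · rw [if_neg hp, if_neg hp]

end WFA

/-- **Theorem 3.** Every determinizable weighted automaton over the
tropical semiring is `R`-pre-disambiguable for every admissible relation `R`. -/
theorem determinizable_implies_predisambiguable {α Q : Type} [DecidableEq Q] [DecidableEq α]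
    (A : WFA α ℝ≥0∞ Q) (hdet : A.Determinizable)
    (R : Q → Q → Prop) [DecidableRel R] (hAdm : A.Admissible R) :
    A.RPredisambiguable R := by
  classical
  set T0 : Finset Q := A.I ∪ A.E.image (fun e => e.2.2.2) with hT0
  set G : Finset Q × (Q → ℝ≥0∞) × Q → Q × Finset Q × (Q → ℝ≥0∞) :=
    fun t => (t.2.2, t.1.filter (fun p => R p t.2.2),
      fun p => if p ∈ t.1.filter (fun p => R p t.2.2)
        then t.2.1 p - (t.1.filter (fun p => R p t.2.2)).inf t.2.1 else ⊤) with hG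
  have hP : Set.Finite {t : Finset Q × (Q → ℝ≥0∞) × Q |
      ∃ x : List α, t.1 = A.reach A.I x ∧ t.2.1 = A.detSub x ∧ t.2.2 ∈ t.1} := by
    apply Set.Finite.subset ((T0.powerset.finite_toSet).prod (hdet.prod T0.finite_toSet))
    rintro ⟨U, f, q⟩ ⟨x, rfl, rfl, hq⟩
    have hsub := A.reach_subset' x A.I Finset.subset_union_left
    exact ⟨Finset.mem_coe.mpr (Finset.mem_powerset.mpr hsub),
      ⟨x, ⟨q, hq⟩, rfl⟩, Finset.mem_coe.mpr (hsub hq)⟩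
  apply Set.Finite.subset (hP.image G)
  rintro ⟨q, U, f⟩ ⟨x, hq, hU, hf⟩
  refine ⟨(A.reach A.I x, A.detSub x, q), ⟨x, rfl, rfl, hq⟩, ?_⟩
  simp only [hG]
  refine Prod.ext rfl (Prod.ext ?_ ?_)
  · exact hU.symm
  · funext p
    rw [hf, A.sT_eq' R x q p]
    rfl
end

section
/- In the tropical semiring, if the set of R-pre-disambiguation states is infinite, then there exist two states q, r of A and an infinite family of strings (x_n) such that each x_n reaches both q and r from the initial states and the set of differences {W_I(x_n, q) − W_I(x_n, r) : n ∈ ℕ} is infinite. -/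
open scoped ENNReal

section Aux

open scoped ENNReal NNReal

private lemma ereal_key (m c : ℝ≥0∞) (hm : m ≠ ⊤) :
    (m : EReal) - ((c + m : ℝ≥0∞) : EReal) = -(c : EReal) := by
  lift m to ℝ≥0 using hm
  induction c using ENNReal.recTopCoe with
  | top => simp [EReal.coe_ennreal_top]
  | coe c =>
    rw [← ENNReal.coe_add]
    rw [show (((c + m : ℝ≥0) : ℝ≥0∞) : EReal) = (((c:ℝ) + m : ℝ) : EReal) from by push_cast; rfl]
    rw [show ((m : ℝ≥0∞) : EReal) = ((m:ℝ) : EReal) from rfl,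
        show (((c:ℝ≥0) : ℝ≥0∞) : EReal) = ((c:ℝ) : EReal) from rfl,
        ← EReal.coe_sub, ← EReal.coe_neg]
    norm_num

private lemma reach_subset_aux {α S Q : Type} [DecidableEq Q] [DecidableEq α] (A : WFA α S Q) :
    ∀ (x : List α) (U : Finset Q), A.reach U x ⊆ U ∪ A.E.image (fun e => e.2.2.2)
  | [], U => by simp [WFA.reach]
  | a :: x, U => by
      intro p hp
      rw [show A.reach U (a :: x) = A.reach (A.dstep U a) x from rfl] at hp
      have h1 := reach_subset_aux A x (A.dstep U a) hp
      rw [Finset.mem_union] at h1 ⊢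
      rcases h1 with h | h
      · right
        have : A.dstep U a ⊆ A.E.image (fun e => e.2.2.2) :=
          Finset.image_subset_image (Finset.filter_subset _ _)
        exact this h
      · right; exact h

end Aux

/-- In the tropical semiring, if the set of `R`-pre-disambiguation
states is infinite, then there exist two states `q, r` of `A` and an infinite family of
strings `(xₙ)` such that each `xₙ` reaches both `q` and `r` from the initial states and
the set of (signed) weight differences `{W_I(xₙ, q) − W_I(xₙ, r) : n ∈ ℕ}` is infinite. -/
theorem infinite_states_infinite_differences {α Q : Type} [DecidableEq Q] [DecidableEq α]
    (A : WFA α ℝ≥0∞ Q) (R : Q → Q → Prop) [DecidableRel R]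
    (hAdm : A.Admissible R) (hinf : (A.Sts R).Infinite) :
    ∃ (q r : Q) (xs : ℕ → List α),
      (∀ n : ℕ, q ∈ A.reach A.I (xs n) ∧ r ∈ A.reach A.I (xs n)) ∧
      Set.Infinite {d : EReal | ∃ n : ℕ,
        d = (A.WIt (xs n) q : EReal) - (A.WIt (xs n) r : EReal)} := by
  classical
  set T : Finset Q := A.I ∪ A.E.image (fun e => e.2.2.2) with hT
  have hreach : ∀ x : List α, A.reach A.I x ⊆ T := fun x => reach_subset_aux A x A.I
  have hdel : ∀ (x : List α) (q : Q), A.deltaR R x q ⊆ A.reach A.I x :=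
    fun x q => Finset.filter_subset _ _
  -- pigeonhole 1 : fix the head state and the subset
  have h1 : ∃ q D, {st ∈ A.Sts R | st.1 = q ∧ st.2.1 = D}.Infinite := by
    by_contra h
    push_neg at h
    apply hinf
    have hsub : A.Sts R ⊆ ⋃ q ∈ (T : Set Q), ⋃ D ∈ (T.powerset : Finset (Finset Q)),
        {st ∈ A.Sts R | st.1 = q ∧ st.2.1 = D} := by
      rintro st hst
      obtain ⟨x, hx1, hx2, -⟩ := id hst
      simp only [Set.mem_iUnion]
      refine ⟨st.1, hreach x hx1, st.2.1, ?_, hst, rfl, rfl⟩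
      simp only [Finset.mem_coe, Finset.mem_powerset]
      rw [hx2]
      exact (hdel x st.1).trans (hreach x)
    refine Set.Finite.subset ?_ hsub
    refine Set.Finite.biUnion T.finite_toSet fun q _ => ?_
    refine Set.Finite.biUnion (Finset.finite_toSet _) fun D _ => ?_
    exact h q D
  obtain ⟨q, D, hQD⟩ := h1
  -- the set of residual weight functions
  set G : Set (Q → ℝ≥0∞) :=
    {f | ∃ x : List α, q ∈ A.reach A.I x ∧ D = A.deltaR R x q ∧ f = A.sT R x q} with hGdef
  have hG : G.Infinite := by
    have hinj : Set.InjOn (fun st : Q × Finset Q × (Q → ℝ≥0∞) => st.2.2)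
        {st ∈ A.Sts R | st.1 = q ∧ st.2.1 = D} := by
      rintro st ⟨_, h1, h2⟩ st' ⟨_, h1', h2'⟩ hf
      exact Prod.ext (h1.trans h1'.symm) (Prod.ext (h2.trans h2'.symm) hf)
    have himg : (fun st : Q × Finset Q × (Q → ℝ≥0∞) => st.2.2) ''
        {st ∈ A.Sts R | st.1 = q ∧ st.2.1 = D} ⊆ G := by
      rintro f ⟨st, ⟨hst, hq, hD⟩, rfl⟩
      obtain ⟨x, hx1, hx2, hx3⟩ := hst
      exact ⟨x, hq ▸ hx1, by rw [← hD, hx2, hq], by simpa [hq] using hx3⟩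
    exact Set.Infinite.mono himg (Set.Infinite.image hinj hQD)
  -- D is nonempty
  have hDne : D.Nonempty := by
    rw [Finset.nonempty_iff_ne_empty]
    intro hD0
    apply hG
    refine Set.Finite.subset (Set.finite_singleton (fun _ : Q => (⊤ : ℝ≥0∞))) ?_
    rintro f ⟨x, _, hx2, hx3⟩
    rw [Set.mem_singleton_iff, hx3]
    funext p
    simp only [WFA.sT]
    rw [if_neg]
    rw [← hx2, hD0]
    exact Finset.notMem_empty p
  -- every residual function vanishes somewhere on D
  have hzero : ∀ f ∈ G, ∃ p ∈ D, f p = 0 := by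
    rintro f ⟨x, hx1, hx2, hx3⟩
    obtain ⟨p, hp, hinfeq⟩ := Finset.exists_mem_eq_inf (A.deltaR R x q) (hx2 ▸ hDne)
      (fun p' => A.WIt x p')
    refine ⟨p, hx2 ▸ hp, ?_⟩
    rw [hx3]
    simp only [WFA.sT]
    rw [if_pos hp, ← hinfeq]
    exact tsub_self _
  -- pigeonhole 2 : fix a common minimizer p₀
  have h2 : ∃ p₀ ∈ D, {f ∈ G | f p₀ = 0}.Infinite := by
    by_contra h
    push_neg at h
    apply hG
    have hsub : G ⊆ ⋃ p ∈ (D : Set Q), {f ∈ G | f p = 0} := by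
      intro f hf
      obtain ⟨p, hp, hfp⟩ := hzero f hf
      simp only [Set.mem_iUnion]
      exact ⟨p, hp, hf, hfp⟩
    exact Set.Finite.subset
      (Set.Finite.biUnion D.finite_toSet fun p hp => h p hp) hsub
  obtain ⟨p₀, hp₀D, hG₀⟩ := h2
  set G₀ : Set (Q → ℝ≥0∞) := {f ∈ G | f p₀ = 0} with hG₀def
  -- pigeonhole 3 : some coordinate r takes infinitely many values
  have h3 : ∃ r ∈ D, {v | ∃ f ∈ G₀, f r = v}.Infinite := by
    by_contra h
    push_neg at h
    apply hG₀
    have hres : Set.InjOn (fun (f : Q → ℝ≥0∞) (p : {p // p ∈ D}) => f p.1) G₀ := by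
      rintro f hf g hg hfg
      funext p
      by_cases hp : p ∈ D
      · exact congrFun hfg ⟨p, hp⟩
      · obtain ⟨x, _, hx2, hx3⟩ := hf.1
        obtain ⟨y, _, hy2, hy3⟩ := hg.1
        rw [hx3, hy3]
        simp only [WFA.sT]
        rw [if_neg (by rw [← hx2]; exact hp), if_neg (by rw [← hy2]; exact hp)]
    refine Set.Finite.of_finite_image ?_ hres
    refine Set.Finite.subset
      (Set.Finite.pi (t := fun p : {p // p ∈ D} => {v | ∃ f ∈ G₀, f p.1 = v})
        (fun p => h p.1 p.2)) ?_
    rintro g ⟨f, hf, rfl⟩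
    intro p _
    exact ⟨f, hf, rfl⟩
  obtain ⟨r, hrD, hV⟩ := h3
  -- drop the value 0 and extract a sequence of distinct nonzero values
  have hV' : ({v | ∃ f ∈ G₀, f r = v} \ {0}).Infinite := hV.diff (Set.finite_singleton 0)
  set e := hV'.natEmbedding with he
  have hch : ∀ n : ℕ, ∃ x : List α, q ∈ A.reach A.I x ∧ D = A.deltaR R x q ∧
      (A.sT R x q) p₀ = 0 ∧ (A.sT R x q) r = (e n).1 := by
    intro n
    obtain ⟨⟨f, hfG₀, hfr⟩, -⟩ := (e n).2
    obtain ⟨x, hx1, hx2, hx3⟩ := hfG₀.1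
    exact ⟨x, hx1, hx2, by rw [← hx3]; exact hfG₀.2, by rw [← hx3]; exact hfr⟩
  choose xs hxs1 hxs2 hxs3 hxs4 using hch
  refine ⟨p₀, r, xs, ?_, ?_⟩
  · intro n
    have hsub : D ⊆ A.reach A.I (xs n) := (hxs2 n) ▸ hdel (xs n) q
    exact ⟨hsub hp₀D, hsub hrD⟩
  · -- compute the differences
    have key : ∀ n : ℕ, (A.WIt (xs n) p₀ : EReal) - (A.WIt (xs n) r : EReal)
        = -(((e n).1 : ℝ≥0∞) : EReal) := by
      intro n
      set m : ℝ≥0∞ := (A.deltaR R (xs n) q).inf (fun p' => A.WIt (xs n) p') with hm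
      have hp₀' : p₀ ∈ A.deltaR R (xs n) q := (hxs2 n) ▸ hp₀D
      have hr' : r ∈ A.deltaR R (xs n) q := (hxs2 n) ▸ hrD
      have h₀ : A.WIt (xs n) p₀ - m = 0 := by
        have := hxs3 n
        simp only [WFA.sT] at this
        rwa [if_pos hp₀'] at this
      have hmle : m ≤ A.WIt (xs n) p₀ := Finset.inf_le hp₀'
      have hmeq : A.WIt (xs n) p₀ = m := le_antisymm (tsub_eq_zero_iff_le.mp h₀) hmle
      have hmler : m ≤ A.WIt (xs n) r := Finset.inf_le hr'
      have hrval : A.WIt (xs n) r - m = (e n).1 := by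
        have := hxs4 n
        simp only [WFA.sT] at this
        rwa [if_pos hr'] at this
      have hne0 : ((e n).1 : ℝ≥0∞) ≠ 0 := by
        have := (e n).2.2
        simpa using this
      have hmtop : m ≠ ⊤ := by
        intro htop
        apply hne0
        rw [← hrval]
        have : A.WIt (xs n) r = ⊤ := top_le_iff.mp (htop ▸ hmler)
        rw [this, htop]
        simp
      have hradd : (e n).1 + m = A.WIt (xs n) r := by
        rw [← hrval]; exact tsub_add_cancel_of_le hmler
      rw [hmeq, ← hradd]
      exact ereal_key m (e n).1 hmtop
    have hset : {d : EReal | ∃ n : ℕ,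
        d = (A.WIt (xs n) p₀ : EReal) - (A.WIt (xs n) r : EReal)}
        = Set.range (fun n : ℕ => -(((e n).1 : ℝ≥0∞) : EReal)) := by
      ext d
      constructor
      · rintro ⟨n, rfl⟩; exact ⟨n, (key n).symm⟩
      · rintro ⟨n, rfl⟩; exact ⟨n, (key n).symm⟩
    rw [hset]
    apply Set.infinite_range_of_injective
    intro a b hab
    apply e.injective
    apply Subtype.ext
    exact EReal.coe_ennreal_injective (neg_injective hab)
end
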